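/- Let H_m (m ≥ 4) be the 4-graph on Z/m × (Z/2)² × (Z/2)² × (Z/2)² with edges of types 1–4c as specified. If A is an independent set, then for every i ∈ Z/m: ε_i(A) + max_x |A₂(i+2,x)| + |A₁(i+3)| ≤ 2 + χ[A₁(i+2) ≠ ∅] + χ[A₁(i+3) ≠ ∅]. -/

import Mathlib

open Finset

abbrev G2 := ZMod 2 × ZMod 2

/-- Vertices of the 4-graph `H_m`: elements `(i, x, y, z)` of `ℤ/m ⊕ (ℤ/2)⁶`. -/
abbrev HVtx (m : ℕ) := ZMod m × G2 × G2 × G2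

/-- Edge predicate of the 4-graph `H_m` on `ℤ/m ⊕ (ℤ/2)⁶` (edge types 1, 2, 3,
4a, 4b, 4c of Section 7). -/
def IsHmEdge {m : ℕ} (e : Finset (HVtx m)) : Prop :=
  e.card = 4 ∧ (
  -- type 1
  (∃ (i : ZMod m) (x y : G2) (z₁ z₂ z₃ z₄ : G2),
     e = {(i, x, y, z₁), (i, x, y, z₂), (i, x, y, z₃), (i, x, y, z₄)}) ∨
  -- type 2
  (∃ (i : ZMod m) (x₁ y₁ z₁ x₂ y₂ z₂ x₃ y₃ z₃ x₄ y₄ z₄ : G2),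
     x₁ + x₂ + x₃ + x₄ = 0 ∧
     (x₁, y₁) ≠ (x₂, y₂) ∧ (x₁, y₁) ≠ (x₃, y₃) ∧ (x₁, y₁) ≠ (x₄, y₄) ∧
     (x₂, y₂) ≠ (x₃, y₃) ∧ (x₂, y₂) ≠ (x₄, y₄) ∧ (x₃, y₃) ≠ (x₄, y₄) ∧
     e = {(i, x₁, y₁, z₁), (i, x₂, y₂, z₂), (i, x₃, y₃, z₃), (i, x₄, y₄, z₄)}) ∨
  -- type 3
  (∃ (i : ZMod m) (x₁ y₁' z₁' y₁'' z₁'' x₂' y₂' z₂' x₂'' y₂'' z₂'' : G2),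
     y₁' ≠ y₁'' ∧ y₁' + y₁'' + x₂' + x₂'' = 0 ∧
     e = {(i, x₁, y₁', z₁'), (i, x₁, y₁'', z₁''),
          (i + 1, x₂', y₂', z₂'), (i + 1, x₂'', y₂'', z₂'')}) ∨
  -- type 4a
  (∃ (i : ZMod m) (x₁ y₁ z₁' z₁'' x₂ y₂ z₂' z₂'' : G2),
     z₁' ≠ z₁'' ∧ z₂' ≠ z₂'' ∧ (x₁, y₁) ≠ (x₂, y₂) ∧
     e = {(i, x₁, y₁, z₁'), (i, x₁, y₁, z₁''),
          (i, x₂, y₂, z₂'), (i, x₂, y₂, z₂'')}) ∨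
  -- type 4b
  (∃ (i : ZMod m) (x₁ y₁ z₁' z₁'' x₂ y₂' z₂' y₂'' z₂'' : G2),
     z₁' ≠ z₁'' ∧ y₂' ≠ y₂'' ∧
     e = {(i, x₁, y₁, z₁'), (i, x₁, y₁, z₁''),
          (i + 2, x₂, y₂', z₂'), (i + 2, x₂, y₂'', z₂'')}) ∨
  -- type 4c
  (∃ (i : ZMod m) (x₁ y₁ z₁' z₁'' x₂' y₂' z₂' x₂'' y₂'' z₂'' : G2),
     z₁' ≠ z₁'' ∧ z₁' + z₁'' + x₂' + x₂'' = 0 ∧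
     e = {(i, x₁, y₁, z₁'), (i, x₁, y₁, z₁''),
          (i + 3, x₂', y₂', z₂'), (i + 3, x₂'', y₂'', z₂'')}))

/-- `A₃(i,x,y) = { z : (i,x,y,z) ∈ A }`. -/
def A3 {m : ℕ} (A : Finset (HVtx m)) (i : ZMod m) (x y : G2) : Finset G2 :=
  Finset.univ.filter fun z => (i, x, y, z) ∈ A

/-- `A₂(i,x) = { y : ∃ z, (i,x,y,z) ∈ A }`. -/
def A2 {m : ℕ} (A : Finset (HVtx m)) (i : ZMod m) (x : G2) : Finset G2 :=
  Finset.univ.filter fun y => ∃ z, (i, x, y, z) ∈ A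

/-- `A₁(i) = { x : ∃ y z, (i,x,y,z) ∈ A }`. -/
def A1 {m : ℕ} (A : Finset (HVtx m)) (i : ZMod m) : Finset G2 :=
  Finset.univ.filter fun x => (Finset.univ.filter fun y : G2 => (A3 A i x y).Nonempty).Nonempty

/-- `εᵢ(A) = ∑_{x,y} max{0, |A₃(i,x,y)| - 1}` (note `t - 1 = max{0, t-1}` in `ℕ`). -/
def epsi {m : ℕ} (A : Finset (HVtx m)) (i : ZMod m) : ℕ :=
  ∑ x : G2, ∑ y : G2, ((A3 A i x y).card - 1)

/-!
Every edge type forbids one local configuration of `A`. Types 1 and 2 cap `|A₃|`, `|A₂|` and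
`|A₁|` at 3. Type 4a leaves at most one fibre `A₃(i,x₀,y₀)` with two or more points, so
`εᵢ(A) = |A₃(i,x₀,y₀)| - 1`, and type 4b then forces `|A₂(i+2,x)| ≤ 1` whenever `εᵢ(A) > 0`.
Types 3 and 4c rest on one fact about `(ℤ/2)²`: three distinct elements realise every nonzero
pair sum, so a set of size 3 and a set of size 2 always share a pair sum. Hence
`|A₂(i+2,x)| + |A₁(i+3)| ≤ 4` and `|A₃(i,x₀,y₀)| + |A₁(i+3)| ≤ 4` as soon as both terms are
at least 2, and the inequality follows by arithmetic on these bounds.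
-/

def IsHmIndependent {m : ℕ} (A : Finset (HVtx m)) : Prop :=
  ∀ e : Finset (HVtx m), IsHmEdge e → ¬ e ⊆ A

namespace ZMod

theorem self_ne_add_natCast {m k : ℕ} (hk : 0 < k) (hkm : k < m) (j : ZMod m) :
    j ≠ j + k := by
  rw [Ne, left_eq_add, ZMod.natCast_eq_zero_iff]
  exact Nat.not_dvd_of_pos_of_lt hk hkm

end ZMod

namespace G2

theorem card_le_four (s : Finset G2) : #s ≤ 4 :=
  card_le_univ s

theorem add_add_add_eq_zero_of_pairwise_ne :
    ∀ a b c d : G2, a ≠ b → a ≠ c → a ≠ d → b ≠ c → b ≠ d → c ≠ d → a + b + c + d = 0 := by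
  decide

theorem add_self_add_self (x : G2) : x + x + x + x = 0 := by
  revert x; decide

theorem pair_sum_eq_of_three :
    ∀ a b u v w : G2, a ≠ b → u ≠ v → u ≠ w → v ≠ w →
      a + b + u + v = 0 ∨ a + b + u + w = 0 ∨ a + b + v + w = 0 := by
  decide

theorem exists_pair_sums_eq_of_three_le {S T : Finset G2} (hS : 2 ≤ #S) (hT : 3 ≤ #T) :
    ∃ s ∈ S, ∃ s' ∈ S, s ≠ s' ∧ ∃ t ∈ T, ∃ t' ∈ T, t ≠ t' ∧ s + s' + t + t' = 0 := by
  obtain ⟨a, ha, b, hb, hab⟩ := one_lt_card.mp hS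
  obtain ⟨u, hu, v, hv, w, hw, huv, huw, hvw⟩ := two_lt_card.mp hT
  refine ⟨a, ha, b, hb, hab, ?_⟩
  rcases pair_sum_eq_of_three a b u v w hab huv huw hvw with h | h | h
  exacts [⟨u, hu, v, hv, huv, h⟩, ⟨u, hu, w, hw, huw, h⟩, ⟨v, hv, w, hw, hvw, h⟩]

theorem exists_pair_sums_eq {S T : Finset G2} (hS : 2 ≤ #S) (hT : 2 ≤ #T)
    (h : 5 ≤ #S + #T) :
    ∃ s ∈ S, ∃ s' ∈ S, s ≠ s' ∧ ∃ t ∈ T, ∃ t' ∈ T, t ≠ t' ∧ s + s' + t + t' = 0 := by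
  by_cases hT3 : 3 ≤ #T
  · exact exists_pair_sums_eq_of_three_le hS hT3
  · obtain ⟨t, ht, t', ht', htt', s, hs, s', hs', hss', hsum⟩ :=
      exists_pair_sums_eq_of_three_le hT (show 3 ≤ #S by omega)
    exact ⟨s, hs, s', hs', hss', t, ht, t', ht', htt', by linear_combination hsum⟩

end G2

section Projections

variable {m : ℕ} {A : Finset (HVtx m)}

theorem mem_A3 {i : ZMod m} {x y z : G2} : z ∈ A3 A i x y ↔ (i, x, y, z) ∈ A := by
  simp [A3]

theorem mem_A2 {i : ZMod m} {x y : G2} : y ∈ A2 A i x ↔ ∃ z, (i, x, y, z) ∈ A := by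
  simp [A2]

theorem mem_A1 {i : ZMod m} {x : G2} : x ∈ A1 A i ↔ ∃ y z, (i, x, y, z) ∈ A := by
  simp only [A1, mem_filter, mem_univ, true_and]
  simp [Finset.Nonempty, mem_A3]

theorem A1_nonempty_of_A2_nonempty {i : ZMod m} {x : G2} (h : (A2 A i x).Nonempty) :
    (A1 A i).Nonempty := by
  obtain ⟨y, hy⟩ := h
  obtain ⟨z, hz⟩ := mem_A2.mp hy
  exact ⟨x, mem_A1.mpr ⟨y, z, hz⟩⟩

end Projections

namespace IsHmIndependent

variable {m : ℕ} {A : Finset (HVtx m)}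

theorem card_A3_le_three (hA : IsHmIndependent A) (i : ZMod m) (x y : G2) :
    #(A3 A i x y) ≤ 3 := by
  by_contra! h
  obtain ⟨a, b, c, d, hab, hac, had, hbc, hbd, hcd, hs⟩ :=
    card_eq_four.mp (le_antisymm (G2.card_le_four _) h)
  refine hA {(i, x, y, a), (i, x, y, b), (i, x, y, c), (i, x, y, d)}
    ⟨card_eq_four.mpr ⟨_, _, _, _, ?_, ?_, ?_, ?_, ?_, ?_, rfl⟩,
      Or.inl ⟨i, x, y, a, b, c, d, rfl⟩⟩ ?_
  all_goals simp_all [insert_subset_iff, ← mem_A3]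

theorem card_A2_le_three (hA : IsHmIndependent A) (i : ZMod m) (x : G2) :
    #(A2 A i x) ≤ 3 := by
  by_contra! h
  obtain ⟨a, b, c, d, hab, hac, had, hbc, hbd, hcd, hs⟩ :=
    card_eq_four.mp (le_antisymm (G2.card_le_four _) h)
  have hmem : ∀ y ∈ A2 A i x, ∃ z, (i, x, y, z) ∈ A := fun y => mem_A2.mp
  obtain ⟨za, ha⟩ := hmem a (by simp [hs])
  obtain ⟨zb, hb⟩ := hmem b (by simp [hs])
  obtain ⟨zc, hc⟩ := hmem c (by simp [hs])
  obtain ⟨zd, hd⟩ := hmem d (by simp [hs])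
  refine hA {(i, x, a, za), (i, x, b, zb), (i, x, c, zc), (i, x, d, zd)}
    ⟨card_eq_four.mpr ⟨_, _, _, _, ?_, ?_, ?_, ?_, ?_, ?_, rfl⟩,
      Or.inr <| Or.inl ⟨i, x, a, za, x, b, zb, x, c, zc, x, d, zd,
        G2.add_self_add_self x, ?_, ?_, ?_, ?_, ?_, ?_, rfl⟩⟩ ?_
  all_goals simp_all [insert_subset_iff]

theorem card_A1_le_three (hA : IsHmIndependent A) (i : ZMod m) : #(A1 A i) ≤ 3 := by
  by_contra! h
  obtain ⟨a, b, c, d, hab, hac, had, hbc, hbd, hcd, hs⟩ :=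
    card_eq_four.mp (le_antisymm (G2.card_le_four _) h)
  have hmem : ∀ x ∈ A1 A i, ∃ y z, (i, x, y, z) ∈ A := fun x => mem_A1.mp
  obtain ⟨ya, za, ha⟩ := hmem a (by simp [hs])
  obtain ⟨yb, zb, hb⟩ := hmem b (by simp [hs])
  obtain ⟨yc, zc, hc⟩ := hmem c (by simp [hs])
  obtain ⟨yd, zd, hd⟩ := hmem d (by simp [hs])
  refine hA {(i, a, ya, za), (i, b, yb, zb), (i, c, yc, zc), (i, d, yd, zd)}
    ⟨card_eq_four.mpr ⟨_, _, _, _, ?_, ?_, ?_, ?_, ?_, ?_, rfl⟩,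
      Or.inr <| Or.inl ⟨i, a, ya, za, b, yb, zb, c, yc, zc, d, yd, zd,
        G2.add_add_add_eq_zero_of_pairwise_ne a b c d hab hac had hbc hbd hcd,
        ?_, ?_, ?_, ?_, ?_, ?_, rfl⟩⟩ ?_
  all_goals simp_all [insert_subset_iff]

theorem card_A3_le_one_of_two_le (hA : IsHmIndependent A) {i : ZMod m} {x y x' y' : G2}
    (hne : (x, y) ≠ (x', y')) (h : 2 ≤ #(A3 A i x y)) : #(A3 A i x' y') ≤ 1 := by
  by_contra! h'
  obtain ⟨a, ha, b, hb, hab⟩ := one_lt_card.mp h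
  obtain ⟨c, hc, d, hd, hcd⟩ := one_lt_card.mp h'
  rw [mem_A3] at ha hb hc hd
  refine hA {(i, x, y, a), (i, x, y, b), (i, x', y', c), (i, x', y', d)}
    ⟨card_eq_four.mpr ⟨_, _, _, _, ?_, ?_, ?_, ?_, ?_, ?_, rfl⟩,
      Or.inr <| Or.inr <| Or.inr <| Or.inl ⟨i, x, y, a, b, x', y', c, d, hab, hcd, hne, rfl⟩⟩ ?_
  all_goals simp_all [insert_subset_iff]

theorem card_A2_add_two_le_one_of_two_le (hA : IsHmIndependent A) (hm : 2 < m) {i : ZMod m}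
    {x y : G2} (h : 2 ≤ #(A3 A i x y)) (x' : G2) : #(A2 A (i + 2) x') ≤ 1 := by
  by_contra! h'
  obtain ⟨a, ha, b, hb, hab⟩ := one_lt_card.mp h
  obtain ⟨c, hc, d, hd, hcd⟩ := one_lt_card.mp h'
  rw [mem_A3] at ha hb
  obtain ⟨zc, hc⟩ := mem_A2.mp hc
  obtain ⟨zd, hd⟩ := mem_A2.mp hd
  have hi : i ≠ i + 2 := by simpa using ZMod.self_ne_add_natCast two_pos hm i
  refine hA {(i, x, y, a), (i, x, y, b), (i + 2, x', c, zc), (i + 2, x', d, zd)}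
    ⟨card_eq_four.mpr ⟨_, _, _, _, ?_, ?_, ?_, ?_, ?_, ?_, rfl⟩,
      Or.inr <| Or.inr <| Or.inr <| Or.inr <| Or.inl
        ⟨i, x, y, a, b, x', c, zc, d, zd, hab, hcd, rfl⟩⟩ ?_
  all_goals simp_all [insert_subset_iff]

theorem card_A2_add_card_A1_add_one_le_four (hA : IsHmIndependent A) (hm : 1 < m)
    {j : ZMod m} {x : G2} (h₂ : 2 ≤ #(A2 A j x)) (h₁ : 2 ≤ #(A1 A (j + 1))) :
    #(A2 A j x) + #(A1 A (j + 1)) ≤ 4 := by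
  by_contra! h
  obtain ⟨a, ha, b, hb, hab, u, hu, v, hv, huv, hsum⟩ := G2.exists_pair_sums_eq h₂ h₁ (by omega)
  obtain ⟨za, ha⟩ := mem_A2.mp ha
  obtain ⟨zb, hb⟩ := mem_A2.mp hb
  obtain ⟨yu, zu, hu⟩ := mem_A1.mp hu
  obtain ⟨yv, zv, hv⟩ := mem_A1.mp hv
  have hj : j ≠ j + 1 := by simpa using ZMod.self_ne_add_natCast one_pos hm j
  refine hA {(j, x, a, za), (j, x, b, zb), (j + 1, u, yu, zu), (j + 1, v, yv, zv)}
    ⟨card_eq_four.mpr ⟨_, _, _, _, ?_, ?_, ?_, ?_, ?_, ?_, rfl⟩,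
      Or.inr <| Or.inr <| Or.inl ⟨j, x, a, za, b, zb, u, yu, zu, v, yv, zv, hab, hsum, rfl⟩⟩ ?_
  all_goals simp_all [insert_subset_iff]

theorem card_A3_add_card_A1_add_three_le_four (hA : IsHmIndependent A) (hm : 3 < m)
    {i : ZMod m} {x y : G2} (h₃ : 2 ≤ #(A3 A i x y)) (h₁ : 2 ≤ #(A1 A (i + 3))) :
    #(A3 A i x y) + #(A1 A (i + 3)) ≤ 4 := by
  by_contra! h
  obtain ⟨a, ha, b, hb, hab, u, hu, v, hv, huv, hsum⟩ := G2.exists_pair_sums_eq h₃ h₁ (by omega)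
  rw [mem_A3] at ha hb
  obtain ⟨yu, zu, hu⟩ := mem_A1.mp hu
  obtain ⟨yv, zv, hv⟩ := mem_A1.mp hv
  have hi : i ≠ i + 3 := by simpa using ZMod.self_ne_add_natCast three_pos hm i
  refine hA {(i, x, y, a), (i, x, y, b), (i + 3, u, yu, zu), (i + 3, v, yv, zv)}
    ⟨card_eq_four.mpr ⟨_, _, _, _, ?_, ?_, ?_, ?_, ?_, ?_, rfl⟩,
      Or.inr <| Or.inr <| Or.inr <| Or.inr <| Or.inr
        ⟨i, x, y, a, b, u, yu, zu, v, yv, zv, hab, hsum, rfl⟩⟩ ?_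
  all_goals simp_all [insert_subset_iff]

/-- The maximiser of `|A₃(i,x,y)|` is the only fibre that can contribute to `εᵢ(A)` (type 4a). -/
theorem exists_epsi_eq (hA : IsHmIndependent A) (i : ZMod m) :
    ∃ x y, epsi A i = #(A3 A i x y) - 1 := by
  obtain ⟨⟨x₀, y₀⟩, -, hmax⟩ :=
    exists_max_image univ (fun p : G2 × G2 => #(A3 A i p.1 p.2)) univ_nonempty
  refine ⟨x₀, y₀, ?_⟩
  have hrest : ∀ p : G2 × G2, p ≠ (x₀, y₀) → #(A3 A i p.1 p.2) - 1 = 0 := by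
    rintro ⟨x, y⟩ hne
    have hle : #(A3 A i x y) ≤ #(A3 A i x₀ y₀) := hmax (x, y) (mem_univ _)
    have := hA.card_A3_le_one_of_two_le (i := i) hne
    dsimp only
    omega
  rw [epsi, ← Fintype.sum_prod_type', Fintype.sum_eq_single (x₀, y₀) hrest]

end IsHmIndependent

theorem stmt_13_general (m : ℕ) (hm : 4 ≤ m)
    (A : Finset (HVtx m))
    (hA : ∀ e : Finset (HVtx m), IsHmEdge e → ¬ e ⊆ A)
    (i : ZMod m) :
    epsi A i + (Finset.univ.sup fun x : G2 => (A2 A (i + 2) x).card)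
        + (A1 A (i + 3)).card
      ≤ 2 + (if (A1 A (i + 2)).Nonempty then 1 else 0)
          + (if (A1 A (i + 3)).Nonempty then 1 else 0) := by
  have hA : IsHmIndependent A := hA
  obtain ⟨x₀, y₀, hε⟩ := hA.exists_epsi_eq i
  obtain ⟨x₁, -, hM⟩ := exists_mem_eq_sup univ univ_nonempty fun x => #(A2 A (i + 2) x)
  rw [hε, hM]
  have hA3_le := hA.card_A3_le_three i x₀ y₀
  have hA2_le := hA.card_A2_le_three (i + 2) x₁
  have hA1_le := hA.card_A1_le_three (i + 3)
  have h4b : 2 ≤ #(A3 A i x₀ y₀) → #(A2 A (i + 2) x₁) ≤ 1 :=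
    fun h => hA.card_A2_add_two_le_one_of_two_le (by omega) h x₁
  have h3 : 2 ≤ #(A2 A (i + 2) x₁) → 2 ≤ #(A1 A (i + 3)) →
      #(A2 A (i + 2) x₁) + #(A1 A (i + 3)) ≤ 4 := by
    rw [show i + 3 = i + 2 + 1 by ring]
    exact hA.card_A2_add_card_A1_add_one_le_four (by omega)
  have h4c : 2 ≤ #(A3 A i x₀ y₀) → 2 ≤ #(A1 A (i + 3)) →
      #(A3 A i x₀ y₀) + #(A1 A (i + 3)) ≤ 4 :=
    hA.card_A3_add_card_A1_add_three_le_four (by omega)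
  have hχ₂ : #(A2 A (i + 2) x₁) = 0 ∨ (if (A1 A (i + 2)).Nonempty then 1 else 0) = 1 := by
    rcases (A2 A (i + 2) x₁).eq_empty_or_nonempty with h | h
    · simp [h]
    · simp [A1_nonempty_of_A2_nonempty h]
  have hχ₃ : #(A1 A (i + 3)) = 0 ∨ (if (A1 A (i + 3)).Nonempty then 1 else 0) = 1 := by
    rcases (A1 A (i + 3)).eq_empty_or_nonempty with h | h <;> simp [h]
  omega

theorem stmt_13 (m : ℕ) [NeZero m] (hm : 4 ≤ m)
    (A : Finset (HVtx m))
    (hA : ∀ e : Finset (HVtx m), IsHmEdge e → ¬ e ⊆ A)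
    (i : ZMod m) :
    epsi A i + (Finset.univ.sup fun x : G2 => (A2 A (i + 2) x).card)
        + (A1 A (i + 3)).card
      ≤ 2 + (if (A1 A (i + 2)).Nonempty then 1 else 0)
          + (if (A1 A (i + 3)).Nonempty then 1 else 0) :=
  stmt_13_general m hm A hA i
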